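/- Let k ≥ 2 be an integer and let T be a tree on n ≥ 8 vertices with diameter n − t, where 2 ≤ t ≤ (n−1)/3. Then n − 2t ≤ α_{k-reg}(T) ≤ n − 4. -/
import Mathlib

open SimpleGraph Finset

/-- The degree of a vertex `v` in `G`: the number of neighbors of `v`. -/
noncomputable def degN {V : Type*} (G : SimpleGraph V) (v : V) : ℕ := {u | G.Adj v u}.ncard

/-- A set of vertices is `k`-independent if the induced subgraph has maximum degree at
most `k`, i.e. every vertex of the set has at most `k` neighbors inside the set. -/
def IsKIndepSet {V : Type*} (G : SimpleGraph V) (k : ℕ) (S : Set V) : Prop :=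
  ∀ v ∈ S, {u | u ∈ S ∧ G.Adj v u}.ncard ≤ k

/-- A set of vertices is regular if all its vertices have the same degree in `G`. -/
def IsRegularSet {V : Type*} (G : SimpleGraph V) (S : Set V) : Prop :=
  ∀ u ∈ S, ∀ v ∈ S, degN G u = degN G v

/-- The regular `k`-independence number `α_{k-reg}(G)`: the maximum cardinality of a set
of vertices that is both `k`-independent and regular. -/
noncomputable def regKIndepNum {V : Type*} (G : SimpleGraph V) (k : ℕ) : ℕ :=
  sSup {m : ℕ | ∃ S : Set V, S.ncard = m ∧ IsKIndepSet G k S ∧ IsRegularSet G S}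

section Aux

variable {V : Type*}

lemma degN_eq_degree [Fintype V] (G : SimpleGraph V) [DecidableRel G.Adj] (v : V) :
    degN G v = G.degree v := by
  classical
  rw [degN, show {u | G.Adj v u} = (G.neighborSet v) from rfl, Set.ncard_eq_toFinset_card',
    degree, neighborFinset_def]

lemma internal_two_nbrs {G : SimpleGraph V} {v x : V} :
    ∀ {u : V} (p : G.Walk u v), p.IsPath → x ∈ p.support → x ≠ u → x ≠ v →
    ∃ a b, a ≠ b ∧ G.Adj x a ∧ G.Adj x b ∧ a ∈ p.support ∧ b ∈ p.support := by
  intro u p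
  induction p with
  | nil =>
    intro _ hx hxu _
    simp only [SimpleGraph.Walk.support_nil, List.mem_singleton] at hx
    exact absurd hx hxu
  | @cons u u' v h q ih =>
    intro hp hx hxu hxv
    have hx' : x ∈ q.support := by
      simpa [SimpleGraph.Walk.support_cons, hxu] using hx
    by_cases hxu' : x = u'
    · subst hxu'
      cases q with
      | nil => exact absurd rfl hxv
      | @cons _ w _ h2 q2 =>
        refine ⟨u, w, ?_, h.symm, h2, ?_, ?_⟩
        · rintro rfl
          exact ((SimpleGraph.Walk.cons_isPath_iff _ _).1 hp).2
            (by simp [SimpleGraph.Walk.support_cons])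
        · simp [SimpleGraph.Walk.support_cons]
        · simp [SimpleGraph.Walk.support_cons]
    · obtain ⟨a, b, hab, ha, hb, has, hbs⟩ :=
        ih ((SimpleGraph.Walk.cons_isPath_iff _ _).1 hp).1 hx' hxu' hxv
      exact ⟨a, b, hab, ha, hb, by simp [SimpleGraph.Walk.support_cons, has],
        by simp [SimpleGraph.Walk.support_cons, hbs]⟩

lemma exists_cross {G : SimpleGraph V} (P : V → Prop) :
    ∀ {w u : V} (_ : G.Walk w u), ¬ P w → P u →
    ∃ z y, G.Adj z y ∧ ¬ P z ∧ P y := by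
  intro w u q
  induction q with
  | nil => intro h1 h2; exact absurd h2 h1
  | @cons w w' u h q ih =>
    intro h1 h2
    by_cases hw : P w'
    · exact ⟨w, w', h, h1, hw⟩
    · exact ih hw h2

lemma key_lemma {G : SimpleGraph V} (hG : G.IsTree) {u v z : V}
    (p : G.Walk u v) (hp : p.IsPath) (hdist : G.dist u v = G.diam)
    (hne : G.ediam ≠ ⊤) (hz : G.Adj u z) (hzs : z ∉ p.support) : False := by
  classical
  have hr : G.Reachable z v := (hG.isConnected.preconnected z v)
  obtain ⟨Q, hQ, hQl⟩ := hr.exists_path_of_dist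
  have hQle : Q.length ≤ G.diam := by rw [hQl]; exact dist_le_diam hne
  have huQ : u ∉ Q.support := by
    intro hu
    have h1 : G.dist z u + G.dist u v ≤ Q.length := by
      calc G.dist z u + G.dist u v
          ≤ (Q.takeUntil u hu).length + (Q.dropUntil u hu).length :=
            Nat.add_le_add (dist_le _) (dist_le _)
        _ = Q.length := by rw [← SimpleGraph.Walk.length_append, Q.take_spec hu]
    have hzu : 1 ≤ G.dist z u :=
      (hG.isConnected.preconnected z u).pos_dist_of_ne (G.ne_of_adj hz.symm)
    omega
  have hc : (SimpleGraph.Walk.cons hz Q).IsPath := hQ.cons huQ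
  obtain ⟨P0, hP0, huniq⟩ := hG.existsUnique_path u v
  have e : SimpleGraph.Walk.cons hz Q = p := (huniq _ hc).trans (huniq p hp).symm
  apply hzs
  rw [← e]
  simp [SimpleGraph.Walk.support_cons]

lemma deg_ge_one [Fintype V] {G : SimpleGraph V} [DecidableRel G.Adj]
    (hc : G.Connected) (h2 : 1 < Fintype.card V) (v : V) : 1 ≤ G.degree v := by
  obtain ⟨w, hw⟩ := Fintype.exists_ne_of_one_lt_card h2 v
  obtain ⟨q⟩ := hc.preconnected v w
  cases q with
  | nil => exact absurd rfl hw
  | cons h q =>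
    rw [Nat.one_le_iff_ne_zero, ← Nat.pos_iff_ne_zero, G.degree_pos_iff_exists_adj]
    exact ⟨_, h⟩

end Aux

/-- For `k ≥ 2` and a tree `T` on `n ≥ 8` vertices with diameter `n - t`, where
`2 ≤ t ≤ (n-1)/3`, we have `n - 2t ≤ α_{k-reg}(T) ≤ n - 4`. -/
theorem stmt_10 {V : Type*} [Fintype V] (T : SimpleGraph V) (hT : T.IsTree)
    (n t k : ℕ) (hk : 2 ≤ k) (hn : Fintype.card V = n) (hn8 : 8 ≤ n)
    (ht2 : 2 ≤ t) (ht3 : 3 * t ≤ n - 1) (hdiam : T.diam = n - t) :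
    n - 2 * t ≤ regKIndepNum T k ∧ regKIndepNum T k ≤ n - 4 := by
  classical
  have hconn := hT.isConnected
  have hn2 : 1 < Fintype.card V := by omega
  haveI : Nonempty V := Fintype.card_pos_iff.mp (by omega)
  have hdeg1 : ∀ v, 1 ≤ T.degree v := deg_ge_one hconn hn2
  set L : Finset V := Finset.univ.filter (fun v => T.degree v = 1) with hLdef
  set A : Finset V := Finset.univ.filter (fun v => T.degree v = 2) with hAdef
  set B : Finset V := Finset.univ.filter (fun v => 3 ≤ T.degree v) with hBdef
  -- partition
  have hdLA : Disjoint L A := by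
    rw [Finset.disjoint_left]
    intro x hx hx'
    simp only [hLdef, hAdef, Finset.mem_filter] at hx hx'
    omega
  have hdLAB : Disjoint (L ∪ A) B := by
    rw [Finset.disjoint_left]
    intro x hx hx'
    simp only [hLdef, hAdef, hBdef, Finset.mem_union, Finset.mem_filter] at hx hx'
    omega
  have hU : L ∪ A ∪ B = Finset.univ := by
    ext x
    simp only [hLdef, hAdef, hBdef, Finset.mem_union, Finset.mem_filter, Finset.mem_univ,
      true_and, iff_true]
    have := hdeg1 x
    omega
  have hpart : L.card + A.card + B.card = n := by
    have := Finset.card_union_of_disjoint hdLAB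
    rw [Finset.card_union_of_disjoint hdLA] at this
    rw [← this, hU, Finset.card_univ, hn]
  -- degree sum
  have hsum : ∑ v : V, T.degree v = 2 * (n - 1) := by
    have he : T.edgeFinset.card = n - 1 := by
      have := hT.card_edgeFinset
      omega
    rw [T.sum_degrees_eq_twice_card_edges, he]
  have hsplit : ∑ v ∈ L, T.degree v + ∑ v ∈ A, T.degree v + ∑ v ∈ B, T.degree v
      = 2 * (n - 1) := by
    rw [← Finset.sum_union hdLA, ← Finset.sum_union hdLAB, hU, hsum]
  have hLsum : ∑ v ∈ L, T.degree v = L.card := by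
    rw [Finset.card_eq_sum_ones]
    refine Finset.sum_congr rfl fun x hx => ?_
    simpa [hLdef] using (Finset.mem_filter.1 hx).2
  have hAsum : ∑ v ∈ A, T.degree v = 2 * A.card := by
    have h2 : ∀ x ∈ A, T.degree x = 2 := fun x hx => by
      simpa [hAdef] using (Finset.mem_filter.1 hx).2
    rw [Finset.sum_congr rfl h2, Finset.sum_const, smul_eq_mul, Nat.mul_comm]
  have hBsum : 3 * B.card ≤ ∑ v ∈ B, T.degree v := by
    have := Finset.card_nsmul_le_sum B (fun v => T.degree v) 3
      (fun x hx => by simpa [hBdef] using (Finset.mem_filter.1 hx).2)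
    simpa [smul_eq_mul, Nat.mul_comm] using this
  obtain ⟨SB, hSB⟩ : ∃ s, ∑ v ∈ B, T.degree v = s := ⟨_, rfl⟩
  rw [hSB] at hsplit hBsum
  rw [hLsum, hAsum] at hsplit
  -- diameter path
  have hdne : T.diam ≠ 0 := by rw [hdiam]; omega
  have hene : T.ediam ≠ ⊤ := SimpleGraph.ediam_ne_top_of_diam_ne_zero hdne
  obtain ⟨u, v, huv⟩ := T.exists_dist_eq_diam
  obtain ⟨p, hp, hpl⟩ := hconn.exists_path_of_dist u v
  have hplen : p.length = n - t := by rw [hpl, huv, hdiam]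
  have hsupcard : p.support.toFinset.card = n - t + 1 := by
    rw [List.toFinset_card_of_nodup hp.support_nodup, SimpleGraph.Walk.length_support, hplen]
  have hint : ∀ x ∈ p.support, x ≠ u → x ≠ v → 2 ≤ T.degree x := by
    intro x hx hxu hxv
    obtain ⟨a, b, hab, ha, hb, -, -⟩ := internal_two_nbrs p hp hx hxu hxv
    have hsub : ({a, b} : Finset V) ⊆ T.neighborFinset x := by
      intro c hc
      simp only [Finset.mem_insert, Finset.mem_singleton] at hc
      rcases hc with rfl | rfl <;> simp [SimpleGraph.mem_neighborFinset, ha, hb]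
    calc 2 = ({a, b} : Finset V).card := (Finset.card_pair hab).symm
      _ ≤ _ := Finset.card_le_card hsub
  -- leaf bound
  have hL : L.card ≤ t + 1 := by
    have hsub : L ⊆ insert u (insert v (Finset.univ \ p.support.toFinset)) := by
      intro x hx
      simp only [Finset.mem_insert, Finset.mem_sdiff, Finset.mem_univ, true_and,
        List.mem_toFinset]
      by_contra hcon
      push_neg at hcon
      obtain ⟨h1, h2, h3⟩ := hcon
      have h4 := hint x h3 h1 h2
      have h5 : T.degree x = 1 := by simpa [hLdef] using (Finset.mem_filter.1 hx).2
      omega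
    have hcard : (Finset.univ \ p.support.toFinset).card = n - (n - t + 1) := by
      rw [Finset.card_sdiff_of_subset (Finset.subset_univ _), Finset.card_univ, hn, hsupcard]
    have := Finset.card_le_card hsub
    have h6 := Finset.card_insert_le u (insert v (Finset.univ \ p.support.toFinset))
    have h7 := Finset.card_insert_le v (Finset.univ \ p.support.toFinset)
    omega
  -- a vertex of degree ≥ 3 exists
  have hb1 : 1 ≤ B.card := by
    obtain ⟨w, hw⟩ : ∃ w, w ∉ p.support := by
      by_contra hcon
      push_neg at hcon
      have hsub : (Finset.univ : Finset V) ⊆ p.support.toFinset :=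
        fun x _ => List.mem_toFinset.2 (hcon x)
      have := Finset.card_le_card hsub
      rw [Finset.card_univ, hn] at this
      omega
    obtain ⟨q⟩ := hconn.preconnected w u
    obtain ⟨z, y, hzy, hz, hy⟩ := exists_cross (· ∈ p.support) q hw p.start_mem_support
    by_cases hyu : y = u
    · subst hyu
      exact absurd (key_lemma hT p hp huv hene hzy.symm hz) (fun h => h)
    by_cases hyv : y = v
    · subst hyv
      refine absurd (key_lemma hT p.reverse hp.reverse ?_ hene hzy.symm ?_) (fun h => h)
      · rw [SimpleGraph.dist_comm]; exact huv
      · simpa [SimpleGraph.Walk.support_reverse] using hz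
    obtain ⟨a, b, hab, ha, hb, has, hbs⟩ := internal_two_nbrs p hp hy hyu hyv
    have hza : z ≠ a := fun h => hz (h ▸ has)
    have hzb : z ≠ b := fun h => hz (h ▸ hbs)
    have hsub3 : ({z, a, b} : Finset V) ⊆ T.neighborFinset y := by
      intro c hc
      simp only [Finset.mem_insert, Finset.mem_singleton] at hc
      rcases hc with rfl | rfl | rfl <;>
        simp [SimpleGraph.mem_neighborFinset, hzy.symm, ha, hb]
    have hcard3 : ({z, a, b} : Finset V).card = 3 := by
      rw [Finset.card_insert_of_notMem (by simp [hza, hzb]), Finset.card_pair hab]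
    have hdy : 3 ≤ T.degree y := hcard3 ▸ Finset.card_le_card hsub3
    have hyB : y ∈ B := by
      simp only [hBdef, Finset.mem_filter, Finset.mem_univ, true_and]
      exact hdy
    exact Finset.card_pos.2 ⟨y, hyB⟩
  -- bounded above
  have hbdd : BddAbove {m : ℕ | ∃ S : Set V, S.ncard = m ∧ IsKIndepSet T k S ∧
      IsRegularSet T S} := by
    refine ⟨n, fun m hm => ?_⟩
    obtain ⟨S, hS, -, -⟩ := hm
    have h1 : S.ncard ≤ (Set.univ : Set V).ncard :=
      Set.ncard_le_ncard (Set.subset_univ S) Set.finite_univ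
    rw [Set.ncard_univ, Nat.card_eq_fintype_card, hn] at h1
    omega
  constructor
  · -- lower bound
    have hmemA : A.card ∈ {m : ℕ | ∃ S : Set V, S.ncard = m ∧ IsKIndepSet T k S ∧
        IsRegularSet T S} := by
      refine ⟨(A : Set V), Set.ncard_coe_finset A, ?_, ?_⟩
      · intro x hx
        have hx2 : T.degree x = 2 := by
          simpa [hAdef] using (Finset.mem_filter.1 (Finset.mem_coe.1 hx)).2
        calc {u | u ∈ (A : Set V) ∧ T.Adj x u}.ncard
            ≤ {u | T.Adj x u}.ncard :=
              Set.ncard_le_ncard (fun c hc => hc.2) (Set.toFinite _)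
          _ = T.degree x := degN_eq_degree T x
          _ ≤ k := by omega
      · intro a ha b hb
        rw [degN_eq_degree, degN_eq_degree]
        have h1 : T.degree a = 2 := by
          simpa [hAdef] using (Finset.mem_filter.1 (Finset.mem_coe.1 ha)).2
        have h2 : T.degree b = 2 := by
          simpa [hAdef] using (Finset.mem_filter.1 (Finset.mem_coe.1 hb)).2
        omega
    have h1 : A.card ≤ regKIndepNum T k := le_csSup hbdd hmemA
    have h2 : n - 2 * t ≤ A.card := by omega
    omega
  · -- upper bound
    apply csSup_le
    · exact ⟨0, ∅, by simp, fun x hx => absurd hx (Set.notMem_empty x),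
        fun x hx => absurd hx (Set.notMem_empty x)⟩
    rintro m ⟨S, hScard, hSk, hSreg⟩
    rcases Set.eq_empty_or_nonempty S with rfl | ⟨v₀, hv₀⟩
    · simp only [Set.ncard_empty] at hScard
      omega
    obtain ⟨d, hdd⟩ : ∃ d, T.degree v₀ = d := ⟨_, rfl⟩
    have hdegS : ∀ x ∈ S, T.degree x = d := by
      intro x hx
      have := hSreg x hx v₀ hv₀
      rw [degN_eq_degree, degN_eq_degree, hdd] at this
      exact this
    by_cases hd3 : 3 ≤ d
    · have hsub : S ⊆ (B : Set V) := by
        intro x hx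
        simp only [Finset.coe_filter, hBdef, Set.mem_setOf_eq, Finset.mem_univ, true_and]
        rw [hdegS x hx]; exact hd3
      have hm : m ≤ B.card := by
        rw [← hScard, ← Set.ncard_coe_finset]
        exact Set.ncard_le_ncard hsub B.finite_toSet
      omega
    · have hd0 : d ≠ 0 := by
        have := hdeg1 v₀; omega
      by_cases hd1 : d = 1
      · subst hd1
        have hsub : S ⊆ (L : Set V) := by
          intro x hx
          simp only [Finset.coe_filter, hLdef, Set.mem_setOf_eq, Finset.mem_univ, true_and]
          exact hdegS x hx
        have hm : m ≤ L.card := by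
          rw [← hScard, ← Set.ncard_coe_finset]
          exact Set.ncard_le_ncard hsub L.finite_toSet
        omega
      · have hd2 : d = 2 := by omega
        subst hd2
        have hsub : S ⊆ (A : Set V) := by
          intro x hx
          simp only [Finset.coe_filter, hAdef, Set.mem_setOf_eq, Finset.mem_univ, true_and]
          exact hdegS x hx
        have hm : m ≤ A.card := by
          rw [← hScard, ← Set.ncard_coe_finset]
          exact Set.ncard_le_ncard hsub A.finite_toSet
        omega
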